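/- In Ending Partizan Subtraction Nim with a finite nonempty removable set S ⊆ ℤ≥2 and arbitrary terminal-winner assignment W, the outcome sequence {O(n)}_{n ∈ ℤ≥0} is eventually periodic: there exist A ≥ 0 and p ≥ 1 such that O(m + p) = O(m) for all m ≥ A. -/

import Mathlib

open scoped Classical

inductive Outcome : Type
  | L | R | N | P
deriving DecidableEq

/-- Outcome determined from the set of outcomes of the options of a non-terminal position. -/
noncomputable def fromOptions (T : Set Outcome) : Outcome :=
  if Outcome.L ∈ T ∧ T ⊆ {Outcome.L, Outcome.N} then Outcome.L
  else if Outcome.R ∈ T ∧ T ⊆ {Outcome.R, Outcome.N} then Outcome.R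
  else if T = {Outcome.N} then Outcome.P
  else Outcome.N

/-- Outcome of Ending Partizan Subtraction Nim with removable set `S ⊆ ℤ≥2` and
terminal assignment `W`. -/
noncomputable def epOutcome (S : Set ℕ) (hS : ∀ s ∈ S, 2 ≤ s) (W : ℕ → Outcome) : ℕ → Outcome :=
  fun n => Nat.strongRecOn n (fun n ih =>
    if ∃ s ∈ S, s ≤ n then
      fromOptions {o | ∃ s, ∃ hs : s ∈ S, ∃ hsn : s ≤ n,
        o = ih (n - s) (by have := hS s hs; omega)}
    else W n)

/-- Outcome of `LR`-Subtraction Nim: at a terminal position, Left wins if the number of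
remaining tokens is even, Right wins if it is odd. -/
noncomputable def lrOutcome (S : Set ℕ) (hS : ∀ s ∈ S, 2 ≤ s) : ℕ → Outcome :=
  epOutcome S hS (fun n => if Even n then Outcome.L else Outcome.R)

lemma epOutcome_eq (S : Set ℕ) (hS : ∀ s ∈ S, 2 ≤ s) (W : ℕ → Outcome) (n : ℕ) :
    epOutcome S hS W n = if ∃ s ∈ S, s ≤ n then
      fromOptions {o | ∃ s, ∃ hs : s ∈ S, ∃ hsn : s ≤ n,
        o = epOutcome S hS W (n - s)} else W n := by
  conv_lhs => rw [epOutcome, Nat.strongRecOn_eq]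
  rfl

instance : Finite Outcome := by
  have : ∀ o : Outcome, o ∈ ({Outcome.L, Outcome.R, Outcome.N, Outcome.P} : Finset Outcome) := by
    intro o; cases o <;> simp
  exact Finite.of_injective (fun o => (⟨o, this o⟩ : {x // x ∈ ({Outcome.L, Outcome.R, Outcome.N, Outcome.P} : Finset Outcome)})) (fun a b h => by simpa using h)

theorem stmt8 (S : Set ℕ) (hS : ∀ s ∈ S, 2 ≤ s) (hfin : S.Finite) (hne : S.Nonempty)
    (W : ℕ → Outcome) :
    ∃ A p : ℕ, 1 ≤ p ∧ ∀ m, A ≤ m → epOutcome S hS W (m + p) = epOutcome S hS W m := by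
  set O := epOutcome S hS W with hO
  obtain ⟨M, hMS, hMmax⟩ := hfin.exists_maximalFor id S hne
  simp only [id] at hMmax
  have hle : ∀ s ∈ S, s ≤ M := fun s hs => by
    by_contra h; have := hMmax hs (by omega); omega
  have hM1 : 1 ≤ M := le_trans (by norm_num) (hS M hMS)
  -- window function
  set w : ℕ → (Fin M → Outcome) := fun n i => O (n + i) with hw
  -- the key step: the window determines the next window
  have key : ∀ a b : ℕ, w a = w b → w (a + 1) = w (b + 1) := by
    intro a b hab
    have hOeq : O (a + M) = O (b + M) := by
      have hcond : ∀ n : ℕ, (∃ s ∈ S, s ≤ n + M) := fun n =>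
        ⟨M, hMS, by omega⟩
      rw [hO, epOutcome_eq, epOutcome_eq, if_pos (hcond a), if_pos (hcond b)]
      congr 1
      ext o
      simp only [Set.mem_setOf_eq]
      constructor
      · rintro ⟨s, hs, hsn, rfl⟩
        refine ⟨s, hs, by have := hle s hs; omega, ?_⟩
        have h1 : a + M - s = a + (M - s) := by have := hle s hs; omega
        have h2 : b + M - s = b + (M - s) := by have := hle s hs; omega
        have hlt : M - s < M := by have := hS s hs; omega
        have := congrFun hab ⟨M - s, hlt⟩
        simp only [hw] at this
        rw [h1, h2]; exact this
      · rintro ⟨s, hs, hsn, rfl⟩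
        refine ⟨s, hs, by have := hle s hs; omega, ?_⟩
        have h1 : a + M - s = a + (M - s) := by have := hle s hs; omega
        have h2 : b + M - s = b + (M - s) := by have := hle s hs; omega
        have hlt : M - s < M := by have := hS s hs; omega
        have := congrFun hab ⟨M - s, hlt⟩
        simp only [hw] at this
        rw [h1, h2]; exact this.symm
    funext i
    rcases lt_or_ge (i.val + 1) M with h | h
    · have := congrFun hab ⟨i.val + 1, h⟩
      simp only [hw] at this ⊢
      have h1 : a + 1 + i.val = a + (i.val + 1) := by omega
      have h2 : b + 1 + i.val = b + (i.val + 1) := by omega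
      rw [h1, h2]; exact this
    · have hi : i.val = M - 1 := by omega
      simp only [hw]
      have h1 : a + 1 + i.val = a + M := by omega
      have h2 : b + 1 + i.val = b + M := by omega
      rw [h1, h2]; exact hOeq
  -- pigeonhole
  obtain ⟨a, b, hab, heq⟩ := Finite.exists_ne_map_eq_of_infinite w
  wlog hlt : a < b generalizing a b
  · exact this b a hab.symm heq.symm (by omega)
  have step : ∀ k, w (a + k) = w (b + k) := by
    intro k
    induction k with
    | zero => simpa using heq
    | succ k ih =>
      have := key (a + k) (b + k) ih
      rw [Nat.add_assoc, Nat.add_assoc] at this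
      exact this
  refine ⟨a, b - a, by omega, fun m hm => ?_⟩
  have h0 : w m ⟨0, by omega⟩ = O m := by simp [hw]
  have h1 : w (m + (b - a)) ⟨0, by omega⟩ = O (m + (b - a)) := by simp [hw]
  rw [← h0, ← h1]
  have : m + (b - a) = b + (m - a) := by omega
  rw [this, ← step (m - a)]
  congr 1
  omega
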